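/- For every M ≥ 0, q^{M(M-1)/2} = ∑_{i=0}^∞ (q^{-M};q)_{2i} / (q^2;q^2)_i · (-1)^i q^{-i^2 + 2iM}, where the sum is finite because (q^{-M};q)_{2i} = 0 for 2i > M. -/

import Mathlib

/-!
Let `S M` be the right-hand side. A Zeilberger certificate `cert` satisfies
`term q (M + 1) i - q ^ M * term q M i = cert q M (i + 1) - cert q M i`; summing over `i`
telescopes to `S (M + 1) = q ^ M * S M`, the boundary terms being killed by the vanishing of
`(q^{-M}; q)_n` for `n > M`. With `S 0 = 1` this gives `S M = q ^ (0 + 1 + ⋯ + (M - 1))`.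
-/

open Finset

/-- q-Pochhammer symbol (a;q)_n. -/
noncomputable def qPoch {K : Type*} [Field K] (q a : K) (n : ℕ) : K :=
  ∏ j ∈ Finset.range n, (1 - a * q ^ j)

noncomputable def qbinom {K : Type*} [Field K] (q : K) (n k : ℕ) : K :=
  if k ≤ n then qPoch q q n / (qPoch q q k * qPoch q q (n - k)) else 0

section QPochhammer

variable {K : Type*} [Field K]

theorem qPoch_succ (q a : K) (n : ℕ) : qPoch q a (n + 1) = qPoch q a n * (1 - a * q ^ n) :=
  prod_range_succ _ n

theorem qPoch_succ' (q a : K) (n : ℕ) : qPoch q a (n + 1) = (1 - a) * qPoch q (a * q) n := by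
  rw [qPoch, qPoch, prod_range_succ', pow_zero, mul_one, mul_comm]
  exact congrArg _ (prod_congr rfl fun j _ => by ring)

theorem qPoch_zpow_neg_eq_zero {q : K} (hq0 : q ≠ 0) {M n : ℕ} (h : M < n) :
    qPoch q (q ^ (-(M : ℤ))) n = 0 :=
  prod_eq_zero (mem_range.2 h) <| by
    rw [zpow_neg, zpow_natCast, inv_mul_cancel₀ (pow_ne_zero M hq0), sub_self]

theorem qPoch_self_ne_zero {q : K} (hq : ¬IsOfFinOrder q) (n : ℕ) : qPoch q q n ≠ 0 :=
  prod_ne_zero_iff.2 fun j _ => sub_ne_zero.2 fun h =>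
    hq <| isOfFinOrder_iff_pow_eq_one.2 ⟨j + 1, j.succ_pos, by rw [pow_succ', ← h]⟩

end QPochhammer

namespace LimitingQChuVandermonde

variable {K : Type*} [Field K]

noncomputable def term (q : K) (M i : ℕ) : K :=
  qPoch q (q ^ (-(M : ℤ))) (2 * i) / qPoch (q ^ 2) (q ^ 2) i *
    (-1) ^ i * q ^ (-(i : ℤ) ^ 2 + 2 * i * M)

noncomputable def cert (q : K) (M : ℕ) : ℕ → K
  | 0 => 0
  | j + 1 => (-1) ^ (j + 1) * qPoch q (q ^ (-(M : ℤ))) (2 * j + 1) / qPoch (q ^ 2) (q ^ 2) j *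
      q ^ (-((j : ℤ) + 1) ^ 2 + 2 * (j + 1) * M + 2 * j + 1 - M)

variable {q : K}

theorem term_sub_eq_cert_sub (hq0 : q ≠ 0) (hq : ¬IsOfFinOrder q) (M i : ℕ) :
    term q (M + 1) i - q ^ M * term q M i = cert q M (i + 1) - cert q M i := by
  cases i with
  | zero =>
    simp [term, cert, qPoch, two_mul, zpow_add₀ hq0, sub_mul, pow_ne_zero M hq0]
  | succ k =>
    have hM : q ^ (-(M : ℤ)) = (q ^ M)⁻¹ := by rw [zpow_neg, zpow_natCast]
    have hM1 : q ^ (-((M + 1 : ℕ) : ℤ)) = (q ^ M)⁻¹ * q⁻¹ := by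
      rw [zpow_neg, zpow_natCast, pow_succ, mul_inv]
    have h1 : qPoch q ((q ^ M)⁻¹ * q⁻¹) (2 * (k + 1)) =
        (1 - (q ^ M)⁻¹ * q⁻¹) * qPoch q (q ^ M)⁻¹ (2 * k + 1) := by
      rw [show 2 * (k + 1) = 2 * k + 1 + 1 by ring, qPoch_succ', inv_mul_cancel_right₀ hq0]
    have h2 : qPoch q (q ^ M)⁻¹ (2 * (k + 1)) =
        qPoch q (q ^ M)⁻¹ (2 * k + 1) * (1 - (q ^ M)⁻¹ * q ^ (2 * k + 1)) :=
      qPoch_succ _ _ _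
    have h3 : qPoch q (q ^ M)⁻¹ (2 * (k + 1) + 1) = qPoch q (q ^ M)⁻¹ (2 * k + 1) *
        (1 - (q ^ M)⁻¹ * q ^ (2 * k + 1)) * (1 - (q ^ M)⁻¹ * q ^ (2 * (k + 1))) := by
      rw [qPoch_succ, h2]
    -- every power of `q` occurring is `w` times a power with natural exponent
    set w := q ^ (-((k : ℤ) + 1) ^ 2 + 2 * (k + 1) * M - M)
    have hw (a : ℤ) (n : ℕ) (h : a = (-((k : ℤ) + 1) ^ 2 + 2 * (k + 1) * M - M) + n) :
        q ^ a = w * q ^ n := by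
      rw [h, zpow_add₀ hq0, zpow_natCast]
    have e1 : q ^ (-((k + 1 : ℕ) : ℤ) ^ 2 + 2 * (k + 1 : ℕ) * (M + 1 : ℕ)) =
        w * q ^ (M + 2 * k + 2) := hw _ _ (by push_cast; ring)
    have e2 : q ^ (-((k + 1 : ℕ) : ℤ) ^ 2 + 2 * (k + 1 : ℕ) * M) = w * q ^ M :=
      hw _ _ (by push_cast; ring)
    have e3 : q ^ (-(((k + 1 : ℕ) : ℤ) + 1) ^ 2 + 2 * ((k + 1 : ℕ) + 1) * M +
        2 * (k + 1 : ℕ) + 1 - M) = w * q ^ (2 * M) := hw _ _ (by push_cast; ring)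
    have e4 : q ^ (-((k : ℤ) + 1) ^ 2 + 2 * (k + 1) * M + 2 * k + 1 - M) =
        w * q ^ (2 * k + 1) := hw _ _ (by push_cast; ring)
    have hDu := qPoch_self_ne_zero (fun h => hq (h.of_pow two_ne_zero)) (k + 1)
    obtain ⟨hD, hu⟩ := mul_ne_zero_iff.1 (qPoch_succ (q ^ 2) (q ^ 2) k ▸ hDu)
    simp only [term, cert, hM, hM1, h1, h3, h2, qPoch_succ (q ^ 2), e1, e2, e3, e4]
    generalize qPoch q (q ^ M)⁻¹ (2 * k + 1) = P
    generalize qPoch (q ^ 2) (q ^ 2) k = D at hD ⊢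
    field_simp
    ring

theorem sum_term_succ (hq0 : q ≠ 0) (hq : ¬IsOfFinOrder q) (M : ℕ) :
    ∑ i ∈ range (M + 2), term q (M + 1) i = q ^ M * ∑ i ∈ range (M + 1), term q M i := by
  have hterm : term q M (M + 1) = 0 := by
    rw [term, qPoch_zpow_neg_eq_zero hq0 (by omega), zero_div, zero_mul, zero_mul]
  have hcert : cert q M (M + 2) = 0 := by
    rw [cert, qPoch_zpow_neg_eq_zero hq0 (by omega), mul_zero, zero_div, zero_mul]
  have htelescope : ∑ i ∈ range (M + 2), (term q (M + 1) i - q ^ M * term q M i) = 0 := by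
    rw [sum_congr rfl fun i _ => term_sub_eq_cert_sub hq0 hq M i, sum_range_sub, hcert, cert,
      sub_zero]
  rwa [sum_sub_distrib, ← mul_sum, sum_range_succ (term q M), hterm, add_zero,
    sub_eq_zero] at htelescope

theorem sum_term_eq_prod (hq0 : q ≠ 0) (hq : ¬IsOfFinOrder q) (M : ℕ) :
    ∑ i ∈ range (M + 1), term q M i = ∏ i ∈ range M, q ^ i := by
  induction M with
  | zero => simp [term, qPoch]
  | succ M ih => rw [sum_term_succ hq0 hq, ih, prod_range_succ, mul_comm]

end LimitingQChuVandermonde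

theorem RatFunc.not_isOfFinOrder_X {K : Type*} [Field K] :
    ¬IsOfFinOrder (RatFunc.X : RatFunc K) := by
  rw [isOfFinOrder_iff_pow_eq_one]
  rintro ⟨n, hn, h⟩
  exact RatFunc.transcendental_X (K := K)
    ⟨Polynomial.X ^ n - 1, Polynomial.X_pow_sub_C_ne_zero hn 1, by simp [h]⟩

/-- The limiting q-Chu--Vandermonde identity. -/
theorem limiting_q_chu_vandermonde (M : ℕ) (q : RatFunc ℚ) (hq : q = RatFunc.X) :
    q ^ (M * (M - 1) / 2) =
      ∑ i ∈ Finset.range (M + 1),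
        qPoch q (q ^ (-(M : ℤ))) (2 * i) / qPoch (q ^ 2) (q ^ 2) i *
          (-1) ^ i * q ^ (-(i : ℤ) ^ 2 + 2 * i * M) := by
  subst hq
  rw [← sum_range_id, ← prod_pow_eq_pow_sum]
  exact (LimitingQChuVandermonde.sum_term_eq_prod RatFunc.X_ne_zero
    RatFunc.not_isOfFinOrder_X M).symm
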